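/- The set σ[D] = {σ(d) : d ∈ D} is contained in K and is dense in K. -/

import Mathlib

open Set Topology

/-- The Cantor space `2^ℕ`, with coordinates indexed by the positive integers. -/
abbrev Cant : Type := ℕ+ → Bool

/-- The support of a point of the Cantor space, as a set of (positive) natural numbers. -/
def ksupp (x : Cant) : Set ℕ := {i | ∃ h : 0 < i, x ⟨i, h⟩ = true}

/-- The plane. -/
abbrev Plane : Type := EuclideanSpace ℝ (Fin 2)

/-- `N_d = max supp d` (with `sSup ∅ = 0` for the zero point). -/
noncomputable def Nd (d : Cant) : ℕ := sSup (ksupp d)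

/-- The basic clopen set `V_d = {y : y(i) = d(i) for 1 ≤ i ≤ N_d}`. -/
noncomputable def Vd (d : Cant) : Set Cant :=
  {y | ∀ i : ℕ+, (i : ℕ) ≤ Nd d → y i = d i}

/-- The set `D_d` of children of `d ∈ D`: the points of `D_{k_d+1}` agreeing with `d`
on the coordinates `1, …, N_d`. -/
noncomputable def Dch (d : Cant) : Set Cant :=
  {e | (ksupp e).Finite ∧ (ksupp e).ncard = (ksupp d).ncard + 1 ∧
    ∀ i : ℕ+, (i : ℕ) ≤ Nd d → e i = d i}

/-- The ball `W(d) = B(σ(d), 2^{−ℓ(d)})`. -/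
noncomputable def Wb (σ : Cant → Plane) (ℓ : Cant → ℕ) (d : Cant) : Set Plane :=
  Metric.ball (σ d) ((2 : ℝ) ^ (-(ℓ d : ℤ)))

/-- The ball `U(d) = B(σ(d), 2^{−ℓ(d)−1})`. -/
noncomputable def Ub (σ : Cant → Plane) (ℓ : Cant → ℕ) (d : Cant) : Set Plane :=
  Metric.ball (σ d) ((2 : ℝ) ^ (-(ℓ d : ℤ) - 1))

/-- The resulting Cantor set `K = ⋂_n cl (⋃ {W(d) : d ∈ D_n})`. -/
noncomputable def Kset (σ : Cant → Plane) (ℓ : Cant → ℕ) : Set Plane :=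
  ⋂ n : ℕ, closure (⋃ d ∈ {d : Cant | (ksupp d).Finite ∧ (ksupp d).ncard = n}, Wb σ ℓ d)

/-- The closed set `F(d) = cl U(d) \ ⋃_{e ∈ D_d} W(e)`. -/
noncomputable def Fd (σ : Cant → Plane) (ℓ : Cant → ℕ) (d : Cant) : Set Plane :=
  closure (Ub σ ℓ d) \ ⋃ e ∈ Dch d, Wb σ ℓ e

/-- The three conditions imposed on the maps `σ : D → ℝ²` and `ℓ : D → ω`:
(1) `⟨σ(e) : e ∈ D_d⟩` converges to `σ(d)` (in the sense that `σ(e)` is close to `σ(d)`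
    once the added support element `N_e` of the child `e` is large);
(2) `cl W(e) ⊆ U(d) \ {σ(d)}` whenever `e ∈ D_d`;
(3) `{cl W(d) : d ∈ D_n}` is pairwise disjoint for every `n`. -/
def CantorConds (σ : Cant → Plane) (ℓ : Cant → ℕ) : Prop :=
  (∀ d : Cant, (ksupp d).Finite → ∀ ε > (0 : ℝ), ∃ M : ℕ, ∀ e ∈ Dch d,
      M ≤ Nd e → dist (σ e) (σ d) < ε) ∧
  (∀ d : Cant, (ksupp d).Finite → ∀ e ∈ Dch d,
      closure (Wb σ ℓ e) ⊆ Ub σ ℓ d \ {σ d}) ∧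
  (∀ n : ℕ, ∀ d e : Cant, (ksupp d).Finite → (ksupp d).ncard = n →
      (ksupp e).Finite → (ksupp e).ncard = n → d ≠ e →
      Disjoint (closure (Wb σ ℓ d)) (closure (Wb σ ℓ e)))

/-! Condition (2) puts `W(e)` inside `W(d)` for every child `e` of `d` and forces `ℓ(d) < ℓ(e)`.
Hence the level unions `⋃ {W(d) : d ∈ D_n}` decrease in `n` and consist of balls of radius at
most `2^{-n}` around points of `σ[D]`, which gives density. A point `σ(d)` lies in `W(d)`, hence in
every level `n ≤ k_d`; for deeper levels, condition (1) makes `σ(d)` a limit of the points `σ(e)`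
of its children, and induction on the depth puts it in the closure of every level. -/

open Metric

lemma le_of_closedBall_subset_ball {E : Type*} [NormedAddCommGroup E] [NormedSpace ℝ E]
    [Nontrivial E] {x y : E} {r s : ℝ} (hr : 0 ≤ r) (h : closedBall x r ⊆ ball y s) :
    r ≤ s := by
  have hs : 0 < s := pos_of_mem_ball (h (mem_closedBall_self hr))
  have := calc 2 * r = diam (closedBall x r) := (diam_closedBall_eq x hr).symm
    _ ≤ diam (ball y s) := diam_mono h isBounded_ball
    _ ≤ 2 * s := diam_ball hs.le
  linarith

lemma le_Nd {x : Cant} (hx : (ksupp x).Finite) {i : ℕ} (hi : i ∈ ksupp x) : i ≤ Nd x :=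
  le_csSup hx.bddAbove hi

lemma coe_mem_ksupp {x : Cant} {m : ℕ+} : (m : ℕ) ∈ ksupp x ↔ x m = true :=
  ⟨fun ⟨_, h⟩ => h, fun h => ⟨m.pos, h⟩⟩

lemma ksupp_update_true (x : Cant) (m : ℕ+) :
    ksupp (Function.update x m true) = insert (m : ℕ) (ksupp x) := by
  ext i
  rcases i.eq_zero_or_pos with rfl | hi
  · simp [ksupp, m.ne_zero.symm]
  · lift i to ℕ+ using hi
    by_cases h : i = m <;> simp [coe_mem_ksupp, h, PNat.coe_inj]

lemma ksupp_update_false (x : Cant) (m : ℕ+) :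
    ksupp (Function.update x m false) = ksupp x \ {(m : ℕ)} := by
  ext i
  rcases i.eq_zero_or_pos with rfl | hi
  · simp [ksupp]
  · lift i to ℕ+ using hi
    by_cases h : i = m <;> simp [coe_mem_ksupp, h, PNat.coe_inj]

lemma update_true_mem_Dch {d : Cant} (hd : (ksupp d).Finite) {m : ℕ+} (hm : Nd d < m) :
    Function.update d m true ∈ Dch d := by
  have hmd : (m : ℕ) ∉ ksupp d := fun h => (le_Nd hd h).not_gt hm
  refine ⟨?_, ?_, fun i hi => Function.update_of_ne (fun h => ?_) _ _⟩
  · simpa [ksupp_update_true] using hd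
  · rw [ksupp_update_true, Set.ncard_insert_of_notMem hmd hd]
  · exact hi.not_gt (h ▸ hm)

def Dn (n : ℕ) : Set Cant := {d | (ksupp d).Finite ∧ (ksupp d).ncard = n}

lemma exists_mem_Dch_of_mem_Dn_succ {d : Cant} {n : ℕ} (hd : d ∈ Dn (n + 1)) :
    ∃ p ∈ Dn n, d ∈ Dch p := by
  obtain ⟨hdf, hdn⟩ := hd
  have hN : Nd d ∈ ksupp d :=
    Nat.sSup_mem (Set.nonempty_of_ncard_ne_zero (by omega)) hdf.bddAbove
  set p := Function.update d ⟨Nd d, hN.1⟩ false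
  have hp : ksupp p = ksupp d \ {Nd d} := ksupp_update_false d _
  have hpf : (ksupp p).Finite := hp ▸ hdf.sdiff
  have hNp : Nd p < Nd d := by
    rcases (ksupp p).eq_empty_or_nonempty with h | h
    · simpa [Nd, h] using hN.1
    · have hmem : Nd p ∈ ksupp d \ {Nd d} := hp ▸ Nat.sSup_mem h hpf.bddAbove
      exact (le_Nd hdf hmem.1).lt_of_ne hmem.2
  have hpd : (ksupp p).ncard + 1 = (ksupp d).ncard := by
    rw [hp, Set.ncard_sdiff_singleton_add_one hN hdf]
  refine ⟨p, ⟨hpf, by omega⟩, hdf, hpd.symm, fun i hi => ?_⟩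
  exact (Function.update_of_ne (fun h => hi.not_gt (by rw [h]; exact hNp)) _ _).symm

section Balls

variable {σ : Cant → Plane} {ℓ : Cant → ℕ} {d e : Cant}

lemma Ub_subset_Wb : Ub σ ℓ d ⊆ Wb σ ℓ d :=
  ball_subset_ball (zpow_le_zpow_right₀ one_le_two (by omega))

lemma Wb_subset_of_closure_subset_Ub (h : closure (Wb σ ℓ e) ⊆ Ub σ ℓ d) :
    Wb σ ℓ e ⊆ Wb σ ℓ d :=
  subset_closure.trans (h.trans Ub_subset_Wb)

lemma lt_of_closure_subset_Ub (h : closure (Wb σ ℓ e) ⊆ Ub σ ℓ d) : ℓ d < ℓ e := by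
  have hr : (0 : ℝ) < 2 ^ (-(ℓ e : ℤ)) := by positivity
  rw [Wb, closure_ball _ hr.ne'] at h
  have := le_of_closedBall_subset_ball hr.le h
  have := (zpow_le_zpow_iff_right₀ one_lt_two).1 this
  omega

end Balls

section Levels

variable {σ : Cant → Plane} {ℓ : Cant → ℕ}

def Wn (σ : Cant → Plane) (ℓ : Cant → ℕ) (n : ℕ) : Set Plane := ⋃ d ∈ Dn n, Wb σ ℓ d

lemma sigma_mem_Wn {d : Cant} (hd : (ksupp d).Finite) : σ d ∈ Wn σ ℓ (ksupp d).ncard :=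
  mem_biUnion (show d ∈ Dn _ from ⟨hd, rfl⟩) (mem_ball_self (by positivity))

lemma Wn_antitone
    (hW : ∀ d, (ksupp d).Finite → ∀ e ∈ Dch d, closure (Wb σ ℓ e) ⊆ Ub σ ℓ d) :
    Antitone (Wn σ ℓ) :=
  antitone_nat_of_succ_le fun _ => iUnion₂_subset fun _ hd => by
    obtain ⟨p, hp, hdp⟩ := exists_mem_Dch_of_mem_Dn_succ hd
    exact (Wb_subset_of_closure_subset_Ub (hW p hp.1 _ hdp)).trans (subset_biUnion_of_mem hp)

lemma ncard_ksupp_le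
    (hW : ∀ d, (ksupp d).Finite → ∀ e ∈ Dch d, closure (Wb σ ℓ e) ⊆ Ub σ ℓ d)
    {d : Cant} (hd : (ksupp d).Finite) : (ksupp d).ncard ≤ ℓ d := by
  induction h : (ksupp d).ncard generalizing d with
  | zero => omega
  | succ n ih =>
    obtain ⟨p, hp, hdp⟩ := exists_mem_Dch_of_mem_Dn_succ ⟨hd, h⟩
    have := ih hp.1 hp.2
    have := lt_of_closure_subset_Ub (hW p hp.1 d hdp)
    omega

lemma Wn_subset_thickening
    (hW : ∀ d, (ksupp d).Finite → ∀ e ∈ Dch d, closure (Wb σ ℓ e) ⊆ Ub σ ℓ d) (n : ℕ) :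
    Wn σ ℓ n ⊆ thickening ((2 : ℝ) ^ (-(n : ℤ))) (σ '' {d | (ksupp d).Finite}) :=
  iUnion₂_subset fun d hd _ hy => mem_thickening_iff.2 ⟨σ d, mem_image_of_mem σ hd.1,
    hy.trans_le <| zpow_le_zpow_right₀ one_le_two <| by
      have := ncard_ksupp_le hW hd.1
      have := hd.2
      omega⟩

lemma Kset_subset_closure_image
    (hW : ∀ d, (ksupp d).Finite → ∀ e ∈ Dch d, closure (Wb σ ℓ e) ⊆ Ub σ ℓ d) :
    Kset σ ℓ ⊆ closure (σ '' {d | (ksupp d).Finite}) := by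
  intro x hx
  rw [closure_eq_iInter_cthickening]
  refine mem_iInter₂.2 fun δ hδ => ?_
  obtain ⟨n, hn⟩ := exists_pow_lt_of_lt_one hδ (one_half_lt_one (α := ℝ))
  have hxn : x ∈ closure (Wn σ ℓ n) := mem_iInter.1 hx n
  refine cthickening_mono ?_ _
    (closure_thickening_subset_cthickening _ _ (closure_mono (Wn_subset_thickening hW n) hxn))
  rw [zpow_neg, zpow_natCast, ← inv_pow, ← one_div]
  exact hn.le

lemma sigma_mem_closure_image_Dch {d : Cant} (hd : (ksupp d).Finite)
    (h1 : ∀ ε > (0 : ℝ), ∃ M : ℕ, ∀ e ∈ Dch d, M ≤ Nd e → dist (σ e) (σ d) < ε) :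
    σ d ∈ closure (σ '' Dch d) := by
  refine Metric.mem_closure_iff.2 fun ε hε => ?_
  obtain ⟨M, hM⟩ := h1 ε hε
  set m : ℕ+ := ⟨max (Nd d) M + 1, Nat.succ_pos _⟩
  have he := update_true_mem_Dch hd (show Nd d < m by simp [m])
  refine ⟨_, mem_image_of_mem σ he, ?_⟩
  rw [dist_comm]
  refine hM _ he ((show M ≤ m by simp [m]; omega).trans (le_Nd he.1 ?_))
  rw [ksupp_update_true]
  exact mem_insert _ _

lemma sigma_mem_closure_Wn
    (h1 : ∀ d : Cant, (ksupp d).Finite → ∀ ε > (0 : ℝ), ∃ M : ℕ, ∀ e ∈ Dch d,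
      M ≤ Nd e → dist (σ e) (σ d) < ε)
    {d : Cant} (hd : (ksupp d).Finite) (m : ℕ) :
    σ d ∈ closure (Wn σ ℓ ((ksupp d).ncard + m)) := by
  induction m generalizing d with
  | zero => exact subset_closure (sigma_mem_Wn hd)
  | succ m ih =>
    have hchildren : σ '' Dch d ⊆ closure (Wn σ ℓ ((ksupp d).ncard + (m + 1))) := by
      rintro _ ⟨e, he, rfl⟩
      simpa [he.2.1, add_right_comm, add_assoc] using ih he.1
    exact closure_minimal hchildren isClosed_closure (sigma_mem_closure_image_Dch hd (h1 d hd))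

lemma sigma_mem_Kset
    (hW : ∀ d, (ksupp d).Finite → ∀ e ∈ Dch d, closure (Wb σ ℓ e) ⊆ Ub σ ℓ d)
    (h1 : ∀ d : Cant, (ksupp d).Finite → ∀ ε > (0 : ℝ), ∃ M : ℕ, ∀ e ∈ Dch d,
      M ≤ Nd e → dist (σ e) (σ d) < ε)
    {d : Cant} (hd : (ksupp d).Finite) : σ d ∈ Kset σ ℓ := by
  refine mem_iInter.2 fun n => ?_
  rcases le_or_gt n (ksupp d).ncard with h | h
  · exact subset_closure (Wn_antitone hW h (sigma_mem_Wn hd))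
  · obtain ⟨m, rfl⟩ := Nat.exists_eq_add_of_le h.le
    exact sigma_mem_closure_Wn h1 hd m

end Levels

/-- The set `σ[D]` is contained in `K` and is dense in `K`. -/
theorem sigma_image_subset_and_dense (σ : Cant → Plane) (ℓ : Cant → ℕ)
    (hc : CantorConds σ ℓ) :
    σ '' {d : Cant | (ksupp d).Finite} ⊆ Kset σ ℓ ∧
      Kset σ ℓ ⊆ closure (σ '' {d : Cant | (ksupp d).Finite}) := by
  obtain ⟨h1, h2, -⟩ := hc
  have hW : ∀ d, (ksupp d).Finite → ∀ e ∈ Dch d, closure (Wb σ ℓ e) ⊆ Ub σ ℓ d :=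
    fun d hd e he => (h2 d hd e he).trans sdiff_subset
  exact ⟨image_subset_iff.2 fun d hd => sigma_mem_Kset hW h1 hd, Kset_subset_closure_image hW⟩
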